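/- If 𝔱 = 𝔠, then there is a minimal right ideal of (βℕ, +) that is also a P-set in ℕ*. -/

import Mathlib

open Filter Set Topology

noncomputable section

/-- `βℕ`: the space of ultrafilters on `ℕ` (the Stone–Čech compactification of `ℕ`). -/
abbrev βN := Ultrafilter ℕ

/-- `ℕ* = βℕ ∖ ℕ`: the free (nonprincipal) ultrafilters, i.e. those containing
every cofinite set. -/
def NStar : Set βN := {p | (p : Filter ℕ) ≤ Filter.cofinite}

/-- The shift map `σ : βℕ → βℕ`, the pushforward under `n ↦ n + 1`. -/
def shift (p : βN) : βN := p.map (· + 1)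

/-- Addition on `βℕ`: `A ∈ p + q ↔ {n | A − n ∈ p} ∈ q`, where `A − n = {m | m + n ∈ A}`. -/
def addU (p q : βN) : βN := q.bind fun n => p.map (· + n)

/-- A right ideal of `(βℕ, +)`: `I + βℕ ⊆ I`. -/
def IsRightIdeal (I : Set βN) : Prop := ∀ p ∈ I, ∀ q : βN, addU p q ∈ I

/-- A minimal right ideal: a nonempty right ideal not properly containing any
other (nonempty) right ideal. -/
def IsMinRightIdeal (I : Set βN) : Prop :=
  I.Nonempty ∧ IsRightIdeal I ∧
    ∀ J : Set βN, J.Nonempty → IsRightIdeal J → J ⊆ I → J = I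

/-- `A* = {p ∈ ℕ* | A ∈ p}`, as a subset of the subspace `ℕ*`. -/
def starSet (A : Set ℕ) : Set ↥NStar := {p | A ∈ (p : βN)}

/-- `F* = ⋂_{A ∈ F} A*` for a (free) filter `F` on `ℕ`. -/
def filterStar (F : Filter ℕ) : Set βN := ⋂ A ∈ F, {p : βN | A ∈ p}

/-- A closed `P`-set of the space `ℕ*`: for every countable collection of open
sets containing `X`, `X` is contained in the interior of the intersection. -/
def IsPSetSub (X : Set ↥NStar) : Prop :=
  IsClosed X ∧ ∀ 𝒜 : Set (Set ↥NStar), 𝒜.Countable →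
    (∀ U ∈ 𝒜, IsOpen U ∧ X ⊆ U) → X ⊆ interior (⋂₀ 𝒜)

/-- A subset of `βℕ` which lies in `ℕ*` and is a closed `P`-set of `ℕ*`. -/
def IsPSetIn (X : Set βN) : Prop :=
  X ⊆ NStar ∧ IsPSetSub (Subtype.val ⁻¹' X)

/-- `A ⊆ ℕ` is thick if it contains arbitrarily long intervals. -/
def Thick (A : Set ℕ) : Prop := ∀ k : ℕ, ∃ n : ℕ, Set.Icc n (n + k) ⊆ A

/-- `A ⊆* B`: `A ∖ B` is finite. -/
def almostSub (A B : Set ℕ) : Prop := (A \ B).Finite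

/-- The tower number `𝔱`: the least cardinality of a `⊆*`-chain of infinite subsets
of `ℕ` with no infinite pseudo-intersection. -/
def towerNum : Cardinal :=
  sInf {c : Cardinal | ∃ C : Set (Set ℕ), c = Cardinal.mk ↥C ∧ (∀ A ∈ C, A.Infinite) ∧
    IsChain almostSub C ∧ ¬∃ B : Set ℕ, B.Infinite ∧ ∀ A ∈ C, almostSub B A}

/-- `𝔱_Θ`: the least cardinality of a `⊆*`-chain of thick subsets of `ℕ` with no
thick `⊆*`-lower bound. -/
def towerNumTheta : Cardinal :=
  sInf {c : Cardinal | ∃ C : Set (Set ℕ), c = Cardinal.mk ↥C ∧ (∀ A ∈ C, Thick A) ∧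
    IsChain almostSub C ∧ ¬∃ B : Set ℕ, Thick B ∧ ∀ A ∈ C, almostSub B A}

/-- The pseudo-intersection number `𝔭`: the least cardinality of a filter base of
infinite subsets of `ℕ` (all finite intersections infinite) with no infinite
pseudo-intersection. -/
def pNum : Cardinal :=
  sInf {c : Cardinal | ∃ C : Set (Set ℕ), c = Cardinal.mk ↥C ∧
    (∀ S : Finset (Set ℕ), ↑S ⊆ C → (⋂ A ∈ S, A : Set ℕ).Infinite) ∧
    ¬∃ B : Set ℕ, B.Infinite ∧ ∀ A ∈ C, almostSub B A}

/-- Chain transitivity for a dynamical system on a topological space, via open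
covers: for every open cover `𝒰` and all `x, y` there is a `𝒰`-chain from `x` to `y`. -/
def ChainTransitive {X : Type*} [TopologicalSpace X] (f : X → X) : Prop :=
  ∀ 𝒰 : Set (Set X), (∀ U ∈ 𝒰, IsOpen U) → ⋃₀ 𝒰 = Set.univ →
    ∀ x y : X, ∃ (n : ℕ) (c : ℕ → X), c 0 = x ∧ c n = y ∧
      ∀ i < n, ∃ U ∈ 𝒰, f (c i) ∈ U ∧ c (i + 1) ∈ U

lemma shift_mem_NStar {p : βN} (hp : p ∈ NStar) : shift p ∈ NStar := by
  have h1 : Filter.Tendsto (· + 1) Filter.cofinite Filter.cofinite :=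
    Function.Injective.tendsto_cofinite (add_left_injective 1)
  simp only [NStar, Set.mem_setOf_eq, shift, Ultrafilter.coe_map] at *
  exact (Filter.map_mono hp).trans h1

/-- The shift map restricted to `ℕ*`. -/
def shiftStar (p : ↥NStar) : ↥NStar := ⟨shift p.1, shift_mem_NStar p.2⟩

/-!
Assuming `𝔱 = 𝔠`, a recursion of length `𝔠` produces thick sets `T_α` with `T_β ⊆* T_α - n`
for all `α < β` and all `n`, where stage `α` also decides the `α`-th subset `A` of `ℕ`: either
`T_α` misses `A`, or `T_α` is covered by finitely many translates `A - n`. The recursion survives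
limit stages because `⊆*`-chains of fewer than `𝔱` thick sets have a thick `⊆*`-lower bound; this
comes from `𝔱 ≤ 𝔟`, by diagonalising pseudo-intersections of the sets of starting points of
intervals of each length inside the `T_α`.

The filter `F` generated by the `T_α` is translation invariant and, as `cf 𝔠 > ω`, a P-filter, so
`F* = {p | F ≤ p}` is a closed right ideal and a P-set of `ℕ*`. It is minimal: given `p, q ∈ F*`,
every `A ∈ q` has some `A - n ∈ p` by the decision property, so `q = p + r` for some `r`.
-/

open Cardinal

lemma almostSub_refl (A : Set ℕ) : almostSub A A := by
  simp [almostSub]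

lemma almostSub_of_subset {A B : Set ℕ} (h : A ⊆ B) : almostSub A B := by
  simp [almostSub, sdiff_eq_empty.2 h]

lemma almostSub.trans {A B C : Set ℕ} (hAB : almostSub A B) (hBC : almostSub B C) :
    almostSub A C :=
  (hAB.union hBC).subset (sdiff_triangle A B C)

lemma almostSub.preimage_add {A B : Set ℕ} (h : almostSub A B) (n : ℕ) :
    almostSub ((· + n) ⁻¹' A) ((· + n) ⁻¹' B) := by
  rw [almostSub, ← preimage_sdiff]
  exact h.preimage (add_left_injective n).injOn

lemma almostSub_iff_eventually {A B : Set ℕ} :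
    almostSub A B ↔ ∀ᶠ n in atTop, n ∈ A → n ∈ B := by
  rw [← Nat.cofinite_eq_atTop, eventually_cofinite]
  simp only [Classical.not_imp]
  rfl

lemma mem_cofinite_inf_principal {A T : Set ℕ} : A ∈ cofinite ⊓ 𝓟 T ↔ almostSub T A := by
  rw [mem_inf_principal, mem_cofinite, compl_ofPred]
  simp only [Classical.not_imp]
  rfl

def intervalStarts (m : ℕ) (T : Set ℕ) : Set ℕ := {n | Icc n (n + m) ⊆ T}

def intervalUnion (x : ℕ → ℕ) : Set ℕ := ⋃ m, Icc (x m) (x m + m)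

lemma Thick.exists_ge_Icc_subset {T : Set ℕ} (hT : Thick T) (m N : ℕ) :
    ∃ n, N ≤ n ∧ Icc n (n + m) ⊆ T := by
  obtain ⟨a, ha⟩ := hT (N + m)
  exact ⟨a + N, le_add_self, fun y hy => ha ⟨by grind, by grind⟩⟩

lemma Thick.infinite_intervalStarts {T : Set ℕ} (hT : Thick T) (m : ℕ) :
    (intervalStarts m T).Infinite :=
  infinite_of_forall_exists_gt fun N =>
    let ⟨n, hNn, hn⟩ := hT.exists_ge_Icc_subset m (N + 1)
    ⟨n, hn, hNn⟩

lemma intervalStarts_subset {T : Set ℕ} (m : ℕ) : intervalStarts m T ⊆ T :=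
  fun _ hn => hn ⟨le_rfl, le_self_add⟩

lemma Thick.infinite {T : Set ℕ} (hT : Thick T) : T.Infinite :=
  (hT.infinite_intervalStarts 0).mono (intervalStarts_subset 0)

lemma almostSub.intervalStarts {T T' : Set ℕ} (h : almostSub T T') (m : ℕ) :
    almostSub (intervalStarts m T) (intervalStarts m T') := by
  obtain ⟨N, hN⟩ := h.bddAbove
  refine (finite_Iic N).subset fun n ⟨hnT, hnT'⟩ => ?_
  obtain ⟨y, hy, hyT'⟩ := not_subset.1 hnT'
  exact hy.1.trans (hN ⟨hnT hy, hyT'⟩)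

lemma thick_intervalUnion (x : ℕ → ℕ) : Thick (intervalUnion x) :=
  fun m => ⟨x m, subset_iUnion (fun m => Icc (x m) (x m + m)) m⟩

lemma almostSub_intervalUnion {x : ℕ → ℕ} {T : Set ℕ}
    (h : ∀ᶠ m in atTop, Icc (x m) (x m + m) ⊆ T) : almostSub (intervalUnion x) T := by
  obtain ⟨M, hM⟩ := eventually_atTop.1 h
  refine ((finite_lt_nat M).biUnion fun m _ => finite_Icc (x m) (x m + m)).subset ?_
  rintro y ⟨hy, hyT⟩
  obtain ⟨m, hm⟩ := mem_iUnion.1 hy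
  exact mem_biUnion (lt_of_not_ge fun hMm => hyT (hM m hMm hm)) hm

lemma Thick.exists_thick_subset_almostSub_preimage {T : Set ℕ} (hT : Thick T) :
    ∃ T' ⊆ T, Thick T' ∧ ∀ n, almostSub T' ((· + n) ⁻¹' T) := by
  choose a ha using fun k => hT (2 * k)
  refine ⟨intervalUnion a, iUnion_subset fun k => (Icc_subset_Icc_right (by omega)).trans (ha k),
    thick_intervalUnion a, fun n => almostSub_intervalUnion ?_⟩
  filter_upwards [eventually_ge_atTop n] with k hk y hy
  exact ha k ⟨hy.1.trans le_self_add, by grind⟩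

lemma Thick.exists_thick_subset_disjoint_or_subset {T : Set ℕ} (hT : Thick T) (A : Set ℕ) :
    ∃ T' ⊆ T, Thick T' ∧ (Disjoint T' A ∨ ∃ k, T' ⊆ ⋃ n ∈ Iic k, (· + n) ⁻¹' A) := by
  by_cases hTA : Thick (T \ A)
  · exact ⟨T \ A, sdiff_subset, hTA, Or.inl disjoint_sdiff_left⟩
  obtain ⟨k, hk⟩ : ∃ k, ∀ n, ¬ Icc n (n + k) ⊆ T \ A := by simpa [Thick] using hTA
  choose b hb using fun m => hT (m + k)
  have hstarts : intervalUnion b ⊆ intervalStarts k T :=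
    iUnion_subset fun m x hx y hy => hb m ⟨hx.1.trans hy.1, by grind⟩
  refine ⟨intervalUnion b, hstarts.trans (intervalStarts_subset k), thick_intervalUnion b,
    Or.inr ⟨k, fun x hx => ?_⟩⟩
  obtain ⟨y, hy, hyTA⟩ := not_subset.1 (hk x)
  have hyA : y ∈ A := by_contra fun h => hyTA ⟨hstarts hx hy, h⟩
  exact mem_biUnion (x := y - x) (by grind) (by grind)

lemma exists_pseudoIntersection {C : Set (Set ℕ)} (hC : #C < towerNum)
    (hinf : ∀ A ∈ C, A.Infinite) (hchain : IsChain almostSub C) :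
    ∃ B : Set ℕ, B.Infinite ∧ ∀ A ∈ C, almostSub B A := by
  by_contra hB
  exact (csInf_le' ⟨C, rfl, hinf, hchain, hB⟩ : towerNum ≤ #C).not_gt hC

lemma isChain_image_of_lt {ι α : Type*} [LinearOrder ι] {R : α → α → Prop} {f : ι → α}
    {s : Set ι} (h : ∀ j ∈ s, ∀ k ∈ s, j < k → R (f k) (f j)) : IsChain R (f '' s) := by
  rintro _ ⟨j, hj, rfl⟩ _ ⟨k, hk, rfl⟩ hne
  rcases lt_trichotomy j k with hjk | rfl | hkj
  · exact Or.inr (h j hj k hk hjk)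
  · exact absurd rfl hne
  · exact Or.inl (h k hk j hj hkj)

theorem exists_transfinite_chain {ι α : Type*} [LT ι] [WellFoundedLT ι] [Nonempty α]
    (P : ι → α → Prop) (R : α → α → Prop)
    (step : ∀ i (f : ι → α), (∀ j < i, P j (f j) ∧ ∀ k < j, R (f k) (f j)) →
      ∃ a, P i a ∧ ∀ j < i, R (f j) a) :
    ∃ f : ι → α, ∀ i, P i (f i) ∧ ∀ j < i, R (f j) (f i) := by
  classical
  let F : ∀ i, (∀ j, j < i → α) → α := fun i g =>
    if h : ∃ a, P i a ∧ ∀ j (hj : j < i), R (g j hj) a then h.choose else Classical.arbitrary α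
  let f : ι → α := wellFounded_lt.fix F
  refine ⟨f, fun i => ?_⟩
  induction i using WellFoundedLT.induction with | _ i ih
  have hex := step i f ih
  have hfi : f i = hex.choose := by
    rw [show f i = F i (fun j _ => f j) from wellFounded_lt.fix_eq F i]
    exact dif_pos hex
  exact hfi ▸ hex.choose_spec

def IsSparse (g : ℕ → ℕ) (T : Set ℕ) : Prop := ∀ x ∈ T, ∀ y ∈ T, x < y → ∀ z ≤ x, g z < y

lemma Set.Infinite.exists_isSparse_subset {S : Set ℕ} (hS : S.Infinite) (g : ℕ → ℕ) :
    ∃ T ⊆ S, T.Infinite ∧ IsSparse g T := by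
  have hnext : ∀ x : ℕ, ∀ᶠ y in atTop, x < y ∧ ∀ z ≤ x, g z < y := fun x =>
    (eventually_gt_atTop x).and
      ((eventually_all_finite (finite_Iic x)).2 fun z _ => eventually_gt_atTop (g z))
  obtain ⟨u, huS, hu⟩ := exists_seq_of_forall_finset_exists (· ∈ S)
    (fun x y => x < y ∧ ∀ z ≤ x, g z < y) fun s _ =>
      ((Nat.frequently_atTop_iff_infinite.2 hS).and_eventually
        ((eventually_all_finset s).2 fun x _ => hnext x)).exists
  have hmono : StrictMono u := fun m n h => (hu m n h).1
  refine ⟨range u, range_subset_iff.2 huS, infinite_range_of_injective hmono.injective, ?_⟩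
  rintro _ ⟨a, rfl⟩ _ ⟨b, rfl⟩ hab
  exact (hu a b (hmono.lt_iff_lt.1 hab)).2

theorem exists_eventually_lt_of_mk_lt_towerNum {ι : Type} (hι : #ι < towerNum)
    (g : ι → ℕ → ℕ) : ∃ d : ℕ → ℕ, ∀ i, ∀ᶠ m in atTop, g i m < d m := by
  obtain ⟨_, _⟩ := exists_wellFoundedLT ι
  obtain ⟨S, hS⟩ := exists_transfinite_chain (fun i T => T.Infinite ∧ IsSparse (g i) T)
    (fun A B => almostSub B A) fun i S hS => by
      obtain ⟨B, hB, hBS⟩ := exists_pseudoIntersection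
        (mk_image_le.trans_lt ((mk_set_le _).trans_lt hι))
        (forall_mem_image.2 fun j hj => (hS j hj).1.1)
        (isChain_image_of_lt fun j _ k hk hjk => (hS k hk).2 j hjk)
      obtain ⟨T, hTB, hT⟩ := hB.exists_isSparse_subset (g i)
      exact ⟨T, hT, fun j hj => (almostSub_of_subset hTB).trans (hBS _ (mem_image_of_mem S hj))⟩
  obtain ⟨B, hB, hBS⟩ := exists_pseudoIntersection (mk_range_le.trans_lt hι)
    (forall_mem_range.2 fun i => (hS i).1.1)
    (by simpa using isChain_image_of_lt (s := univ) fun j _ k _ hjk => (hS k).2 j hjk)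
  -- Beyond the finitely many points of `B \ S i`, two successive points of `B` above `m` lie in
  -- the `g i`-sparse set `S i`, so the second one exceeds `g i m`.
  choose next hnextB hnext using hB.exists_gt
  refine ⟨fun m => next (next m), fun i => ?_⟩
  obtain ⟨N, hN⟩ := eventually_atTop.1 (almostSub_iff_eventually.1 (hBS _ (mem_range_self i)))
  filter_upwards [eventually_ge_atTop N] with m hm
  exact (hS i).1.2 _ (hN _ (by grind) (hnextB m)) _ (hN _ (by grind) (hnextB _)) (hnext _) m
    (hnext m).le

theorem exists_thick_almostSub_of_isChain {C : Set (Set ℕ)} (hC : #C < towerNum)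
    (hthick : ∀ T ∈ C, Thick T) (hchain : IsChain almostSub C) :
    ∃ B, Thick B ∧ ∀ T ∈ C, almostSub B T := by
  have hX (m : ℕ) : ∃ X : Set ℕ, X.Infinite ∧ ∀ T ∈ C, almostSub X (intervalStarts m T) := by
    obtain ⟨X, hX, hXC⟩ := exists_pseudoIntersection (mk_image_le.trans_lt hC)
      (forall_mem_image.2 fun T hT => (hthick T hT).infinite_intervalStarts m)
      (hchain.image_of_map_rel _ _ _ fun _ _ h => h.intervalStarts m)
    exact ⟨X, hX, fun T hT => hXC _ (mem_image_of_mem _ hT)⟩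
  choose X hXinf hXC using hX
  choose N hN using fun (T : C) m => eventually_atTop.1 (almostSub_iff_eventually.1 (hXC m T T.2))
  obtain ⟨d, hd⟩ := exists_eventually_lt_of_mk_lt_towerNum hC N
  choose x hxX hdx using fun m => (hXinf m).exists_gt (d m)
  refine ⟨intervalUnion x, thick_intervalUnion x, fun T hT => almostSub_intervalUnion ?_⟩
  filter_upwards [hd ⟨T, hT⟩] with m hm
  exact hN ⟨T, hT⟩ m _ (hm.trans (hdx m)).le (hxX m)

section TowerFilter

def towerFilter {ι : Type*} (f : ι → Set ℕ) : Filter ℕ := ⨅ i, cofinite ⊓ 𝓟 (f i)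

variable {ι : Type*} {f : ι → Set ℕ}

lemma towerFilter_le_cofinite [Nonempty ι] : towerFilter f ≤ cofinite :=
  (iInf_le _ (Classical.arbitrary ι)).trans inf_le_left

variable [LinearOrder ι]

lemma directed_cofinite_inf_principal (hf : ∀ i j, i ≤ j → almostSub (f j) (f i)) :
    Directed (· ≥ ·) fun i => cofinite ⊓ 𝓟 (f i) := fun i j =>
  ⟨max i j, le_inf inf_le_left (le_principal_iff.2 (mem_cofinite_inf_principal.2
      (hf _ _ (le_max_left i j)))),
    le_inf inf_le_left (le_principal_iff.2 (mem_cofinite_inf_principal.2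
      (hf _ _ (le_max_right i j))))⟩

variable [Nonempty ι]

lemma mem_towerFilter (hf : ∀ i j, i ≤ j → almostSub (f j) (f i)) {A : Set ℕ} :
    A ∈ towerFilter f ↔ ∃ i, almostSub (f i) A := by
  simp only [towerFilter, mem_iInf_of_directed (directed_cofinite_inf_principal hf),
    mem_cofinite_inf_principal]

lemma towerFilter_neBot (hf : ∀ i j, i ≤ j → almostSub (f j) (f i))
    (hinf : ∀ i, (f i).Infinite) : (towerFilter f).NeBot :=
  iInf_neBot_of_directed' (directed_cofinite_inf_principal hf) fun i =>
    (hinf i).cofinite_inf_principal_neBot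

end TowerFilter

def IsPFilter (F : Filter ℕ) : Prop :=
  ∀ 𝒜 : Set (Set ℕ), 𝒜.Countable → (∀ A ∈ 𝒜, A ∈ F) → ∃ B ∈ F, ∀ A ∈ 𝒜, almostSub B A

lemma aleph0_lt_cof_ord_continuum : ℵ₀ < (ord 𝔠).cof := by
  by_contra! h
  exact (lt_power_cof_ord aleph0_le_continuum).not_ge
    ((power_le_power_left continuum_ne_zero h).trans_eq continuum_power_aleph0)

lemma exists_gt_of_countable {S : Set (ord 𝔠).ToType} (hS : S.Countable) : ∃ j, ∀ i ∈ S, i < j :=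
  not_isCofinal_iff.1 fun hcof => aleph0_lt_cof_ord_continuum.not_ge <| by
    simpa using (Order.cof_le hcof).trans (le_aleph0_iff_set_countable.2 hS)

theorem exists_invariant_pFilter (h : 𝔠 ≤ towerNum) :
    ∃ F : Filter ℕ, F.NeBot ∧ F ≤ cofinite ∧ (∀ n, Tendsto (· + n) F F) ∧ IsPFilter F ∧
      ∀ A : Set ℕ, Aᶜ ∈ F ∨ ∃ k, ⋃ n ∈ Iic k, (· + n) ⁻¹' A ∈ F := by
  obtain ⟨e⟩ : Nonempty ((ord 𝔠).ToType ≃ Set ℕ) := Cardinal.eq.1 (by simp)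
  have : Nonempty (ord 𝔠).ToType := ⟨e.symm ∅⟩
  have hsmall (i : (ord 𝔠).ToType) : #(Iio i) < towerNum :=
    (mk_Iio_lt i (by simp)).trans_le (by simpa using h)
  obtain ⟨f, hf⟩ := exists_transfinite_chain
    (fun i T => Thick T ∧ (Disjoint T (e i) ∨ ∃ k, T ⊆ ⋃ n ∈ Iic k, (· + n) ⁻¹' e i))
    (fun A B => ∀ n, almostSub B ((· + n) ⁻¹' A)) fun i f hf => by
      obtain ⟨B, hB, hBf⟩ := exists_thick_almostSub_of_isChain (mk_image_le.trans_lt (hsmall i))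
        (forall_mem_image.2 fun j hj => (hf j hj).1.1)
        (isChain_image_of_lt fun j _ k hk hjk => by simpa using (hf k hk).2 j hjk 0)
      obtain ⟨B', hB'B, hB', hB'tr⟩ := hB.exists_thick_subset_almostSub_preimage
      obtain ⟨T, hTB', hT, hTe⟩ := hB'.exists_thick_subset_disjoint_or_subset (e i)
      exact ⟨T, ⟨hT, hTe⟩, fun j hj n => ((almostSub_of_subset hTB').trans (hB'tr n)).trans
        ((hBf _ (mem_image_of_mem f hj)).preimage_add n)⟩
  have hanti (i j : (ord 𝔠).ToType) (hij : i ≤ j) : almostSub (f j) (f i) :=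
    hij.lt_or_eq.elim (fun h => by simpa using (hf j).2 i h 0) fun h => h ▸ almostSub_refl _
  refine ⟨towerFilter f, towerFilter_neBot hanti fun i => (hf i).1.1.infinite,
    towerFilter_le_cofinite, fun n A hA => ?_, fun 𝒜 h𝒜 hF => ?_, fun A => ?_⟩
  · obtain ⟨i, hi⟩ := (mem_towerFilter hanti).1 hA
    obtain ⟨j, hij⟩ := exists_gt_of_countable (countable_singleton i)
    exact (mem_towerFilter hanti).2 ⟨j, ((hf j).2 i (hij i rfl) n).trans (hi.preimage_add n)⟩
  · choose! idx hidx using fun A hA => (mem_towerFilter hanti).1 (hF A hA)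
    obtain ⟨j, hj⟩ := exists_gt_of_countable (h𝒜.image idx)
    exact ⟨f j, (mem_towerFilter hanti).2 ⟨j, almostSub_refl _⟩, fun A hA =>
      (hanti _ _ (hj _ (mem_image_of_mem idx hA)).le).trans (hidx A hA)⟩
  · obtain ⟨⟨-, hdisj | ⟨k, hk⟩⟩, -⟩ := hf (e.symm A)
    · exact Or.inl ((mem_towerFilter hanti).2
        ⟨_, almostSub_of_subset (by simpa using hdisj.subset_compl_right)⟩)
    · exact Or.inr ⟨k, (mem_towerFilter hanti).2 ⟨_, almostSub_of_subset (by simpa using hk)⟩⟩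

lemma mem_filterStar {F : Filter ℕ} {p : βN} : p ∈ filterStar F ↔ (p : Filter ℕ) ≤ F := by
  simp only [filterStar, mem_iInter]
  rfl

lemma isClosed_filterStar (F : Filter ℕ) : IsClosed (filterStar F) :=
  isClosed_biInter fun A _ => ultrafilter_isClosed_basic A

lemma isClosed_NStar : IsClosed NStar := by
  rw [show NStar = filterStar cofinite from Set.ext fun _ => mem_filterStar.symm]
  exact isClosed_filterStar cofinite

lemma mem_addU {p q : βN} {A : Set ℕ} : A ∈ addU p q ↔ {n | (· + n) ⁻¹' A ∈ p} ∈ q :=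
  Iff.rfl

lemma isRightIdeal_filterStar {F : Filter ℕ} (hF : ∀ n, Tendsto (· + n) F F) :
    IsRightIdeal (filterStar F) := by
  intro p hp q
  exact mem_filterStar.2 fun A hA => mem_addU.2 (univ_mem' fun n => mem_filterStar.1 hp (hF n hA))

lemma exists_addU_eq {p q : βN} (h : ∀ A ∈ q, ∃ n, (· + n) ⁻¹' A ∈ p) :
    ∃ r : βN, addU p r = q := by
  let G : {A // A ∈ q} → Filter ℕ := fun A => 𝓟 {n | (· + n) ⁻¹' A.1 ∈ p}
  have hdir : Directed (· ≥ ·) G := fun A B =>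
    ⟨⟨A.1 ∩ B.1, inter_mem A.2 B.2⟩,
      principal_mono.2 fun n hn => mem_of_superset hn (preimage_mono inter_subset_left),
      principal_mono.2 fun n hn => mem_of_superset hn (preimage_mono inter_subset_right)⟩
  have : Nonempty {A // A ∈ q} := ⟨⟨univ, univ_mem⟩⟩
  have : (⨅ A, G A).NeBot := iInf_neBot_of_directed' hdir fun A => principal_neBot_iff.2 (h A.1 A.2)
  obtain ⟨r, hr⟩ := Ultrafilter.exists_le (⨅ A, G A)
  exact ⟨r, Ultrafilter.eq_of_le fun A hA =>
    mem_addU.2 (hr (mem_iInf_of_mem ⟨A, hA⟩ (mem_principal_self _)))⟩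

lemma isMinRightIdeal_filterStar {F : Filter ℕ} [F.NeBot] (hF : ∀ n, Tendsto (· + n) F F)
    (hdich : ∀ A : Set ℕ, Aᶜ ∈ F ∨ ∃ k, ⋃ n ∈ Iic k, (· + n) ⁻¹' A ∈ F) :
    IsMinRightIdeal (filterStar F) := by
  refine ⟨⟨Ultrafilter.of F, mem_filterStar.2 (Ultrafilter.of_le F)⟩, isRightIdeal_filterStar hF,
    fun J ⟨p, hpJ⟩ hJ hJF => hJF.antisymm fun q hq => ?_⟩
  have hp := mem_filterStar.1 (hJF hpJ)
  obtain ⟨r, rfl⟩ := exists_addU_eq fun A hA => by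
    rcases hdich A with hAc | ⟨k, hk⟩
    · exact absurd hA (Ultrafilter.compl_mem_iff_notMem.1 (mem_filterStar.1 hq hAc))
    · obtain ⟨n, -, hn⟩ := (Ultrafilter.finite_biUnion_mem_iff (finite_Iic k)).1 (hp hk)
      exact ⟨n, hn⟩
  exact hJ p hpJ r

lemma isOpen_starSet (A : Set ℕ) : IsOpen (starSet A) :=
  (ultrafilter_isOpen_basic A).preimage continuous_subtype_val

lemma starSet_subset_of_almostSub {A B : Set ℕ} (h : almostSub B A) : starSet B ⊆ starSet A :=
  fun p hp => mem_of_superset (inter_mem hp (p.2 h.compl_mem_cofinite)) fun _ hx =>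
    by_contra fun hxA => hx.2 ⟨hx.1, hxA⟩

lemma exists_mem_starSet_subset {F : Filter ℕ} {U : Set NStar} (hU : IsOpen U)
    (hFU : Subtype.val ⁻¹' filterStar F ⊆ U) : ∃ A ∈ F, starSet A ⊆ U := by
  obtain ⟨V, hV, rfl⟩ := isOpen_induced_iff.1 hU
  have : Nonempty F.sets := ⟨⟨univ, univ_mem⟩⟩
  obtain ⟨⟨A, hA⟩, hAV⟩ := (isClosed_NStar.sdiff hV).isCompact.elim_directed_family_closed
    (fun A : F.sets => {p : βN | A.1 ∈ p}) (fun A => ultrafilter_isClosed_basic A.1)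
    (eq_empty_of_forall_notMem fun p ⟨⟨hpN, hpV⟩, hpF⟩ =>
      hpV (hFU (a := ⟨p, hpN⟩) (by simpa [filterStar] using hpF)))
    fun A B => ⟨⟨A.1 ∩ B.1, inter_mem A.2 B.2⟩, fun p hp => mem_of_superset hp inter_subset_left,
      fun p hp => mem_of_superset hp inter_subset_right⟩
  exact ⟨A, hA, fun p hp => by_contra fun hpV => hAV.subset ⟨⟨p.2, hpV⟩, hp⟩⟩

lemma isPSetIn_filterStar {F : Filter ℕ} (hF : F ≤ cofinite) (hP : IsPFilter F) :
    IsPSetIn (filterStar F) := by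
  refine ⟨fun p hp => (mem_filterStar.1 hp).trans hF,
    ⟨(isClosed_filterStar F).preimage continuous_subtype_val, fun 𝒜 h𝒜 h𝒜X => ?_⟩⟩
  choose! A hAF hAU using fun U hU => exists_mem_starSet_subset (h𝒜X U hU).1 (h𝒜X U hU).2
  obtain ⟨B, hBF, hBA⟩ := hP (A '' 𝒜) (h𝒜.image A) (forall_mem_image.2 hAF)
  have hB : Subtype.val ⁻¹' filterStar F ⊆ starSet B := fun p hp => mem_filterStar.1 hp hBF
  exact hB.trans (interior_maximal (subset_sInter fun U hU =>
    (starSet_subset_of_almostSub (hBA _ (mem_image_of_mem A hU))).trans (hAU U hU))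
    (isOpen_starSet B))

/-- If `𝔱 = 𝔠` then there is a minimal right ideal of `(βℕ, +)`
that is also a `P`-set in `ℕ*`. -/
theorem stmt5 (h : towerNum = Cardinal.continuum) :
    ∃ I : Set βN, IsMinRightIdeal I ∧ IsPSetIn I := by
  obtain ⟨F, _, hcof, hshift, hP, hdich⟩ := exists_invariant_pFilter h.ge
  exact ⟨filterStar F, isMinRightIdeal_filterStar hshift hdich, isPSetIn_filterStar hcof hP⟩

end
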